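/- arXiv:math/9903102 — 4 statements merged into one kernel-verified Lean document; each statement's English description precedes it below -/
import Mathlib

section
/- Let (Ω, Σ, μ) be a measure space without atoms of infinite measure, and let T be a bounded linear operator on L¹(Ω). Suppose that for every ε > 0 and every A ∈ Σ with μ(A) > 0 there exists B ⊆ A with 0 < μ(B) < ∞ such that ‖χ_B · T(χ_B/μ(B))‖_{L¹} < ε. Then for every A ∈ Σ with μ(A) > 0, the restriction T_A of T to L¹(A) satisfies the Daugavet equation: ‖Id_A + T_A‖ = 1 + ‖T_A‖. -/
/-!
The inequality `‖Id_A + T_A‖ ≤ 1 + ‖T_A‖` is the triangle inequality. Conversely, let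
`c < ‖T_A‖`: pick `x ∈ L¹(A)` in the unit ball with `‖T x‖ > c` and a functional `ψ` of norm at
most one with `ψ (T x) = ‖T x‖`. Since simple functions are dense, `φ = ψ ∘ T` satisfies
`|φ (χ_B / μ(B))| > c` for some `B ⊆ A`, and replacing `ψ` by `-ψ` removes the absolute value.
A negative set of the signed measure `E ↦ c μ(E ∩ B) - φ (χ_{E ∩ B})` is a `B₁ ⊆ B` of positive
measure with `φ (χ_{B'} / μ(B')) ≥ c` for every `B' ⊆ B₁`. The hypothesis provides such a `B'`
for which `n = χ_{B'} / μ(B')` and `T n` are almost disjointly supported, so that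
`‖n + T n‖ ≥ 1 + ‖T n‖ - 2ε ≥ 1 + c - 2ε`.
-/

open MeasureTheory ENNReal

variable {Ω : Type*} [MeasurableSpace Ω]

/-- The subspace `L¹(A)` of `L¹(μ)`: functions vanishing a.e. off `A`. -/
noncomputable def LoneSub (μ : Measure Ω) (A : Set Ω) : Submodule ℝ (Lp ℝ 1 μ) where
  carrier := {f | ∀ᵐ x ∂μ, x ∉ A → f x = 0}
  zero_mem' := by
    simp only [Set.mem_setOf_eq]
    filter_upwards [Lp.coeFn_zero ℝ 1 μ] with x hx _
    simpa using hx
  add_mem' := by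
    intro f g hf hg
    have : ∀ᵐ x ∂μ, x ∉ A → ((f + g : Lp ℝ 1 μ) : Ω → ℝ) x = 0 := by
      filter_upwards [Lp.coeFn_add f g, hf, hg] with x hx h1 h2 hxA
      rw [hx]
      simp [h1 hxA, h2 hxA]
    exact this
  smul_mem' := by
    intro c f hf
    have : ∀ᵐ x ∂μ, x ∉ A → ((c • f : Lp ℝ 1 μ) : Ω → ℝ) x = 0 := by
      filter_upwards [Lp.coeFn_smul c f, hf] with x hx h1 hxA
      rw [hx]
      simp [h1 hxA]
    exact this

/-- The normalized indicator function `χ_B / μ(B)` as an element of `L¹(μ)`. -/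
noncomputable def normInd (μ : Measure Ω) {B : Set Ω} (hB : MeasurableSet B)
    (hBfin : μ B ≠ ∞) : Lp ℝ 1 μ :=
  indicatorConstLp 1 hB hBfin ((μ B).toReal)⁻¹

section

variable {μ : Measure Ω}

lemma norm_indicatorConstLp_one {E : Type*} [NormedAddCommGroup E] {s : Set Ω}
    (hs : MeasurableSet s) (hμs : μ s ≠ ∞) (c : E) :
    ‖indicatorConstLp 1 hs hμs c‖ = ‖c‖ * μ.real s := by
  simp [norm_indicatorConstLp one_ne_zero one_ne_top]

lemma indicatorConstLp_eq_smul_normInd {s : Set Ω} (hs : MeasurableSet s) (hμs : μ s ≠ ∞)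
    (a : ℝ) : indicatorConstLp 1 hs hμs a = (a * μ.real s) • normInd μ hs hμs := by
  rcases eq_or_ne (μ s) 0 with h0 | h0
  · have h0' : μ.real s = 0 := by simp [measureReal_def, h0]
    rw [h0', mul_zero, zero_smul, ← norm_eq_zero, norm_indicatorConstLp_one, h0', mul_zero]
  · have h0' : μ.real s ≠ 0 := ENNReal.toReal_ne_zero.mpr ⟨h0, hμs⟩
    ext1
    filter_upwards [Lp.coeFn_smul (a * μ.real s) (normInd μ hs hμs),
      indicatorConstLp_coeFn (p := 1) (hs := hs) (hμs := hμs) (c := a),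
      indicatorConstLp_coeFn (p := 1) (hs := hs) (hμs := hμs) (c := (μ.real s)⁻¹)]
      with x h1 h2 h3
    rw [h1, h2, Pi.smul_apply, normInd, ← measureReal_def, h3]
    by_cases hx : x ∈ s <;> simp [hx, h0']

lemma norm_normInd {s : Set Ω} (hs : MeasurableSet s) (hμs : μ s ≠ ∞) (h0 : μ s ≠ 0) :
    ‖normInd μ hs hμs‖ = 1 := by
  rw [normInd, norm_indicatorConstLp_one, Real.norm_eq_abs, abs_inv,
    abs_of_nonneg ENNReal.toReal_nonneg, measureReal_def,
    inv_mul_cancel₀ (ENNReal.toReal_ne_zero.mpr ⟨h0, hμs⟩)]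

lemma normInd_mem_LoneSub {A B : Set Ω} (hBA : B ⊆ A) (hB : MeasurableSet B)
    (hμB : μ B ≠ ∞) : normInd μ hB hμB ∈ LoneSub μ A := by
  change ∀ᵐ x ∂μ, x ∉ A → _
  filter_upwards [indicatorConstLp_coeFn_notMem (p := 1) (hs := hB) (hμs := hμB)
    (c := (μ B).toReal⁻¹)] with x hx hxA using hx fun hxB => hxA (hBA hxB)

lemma norm_toLp_add_of_disjoint {E : Type*} [NormedAddCommGroup E] {f g : Ω → E}
    (hf : MemLp f 1 μ) (hg : MemLp g 1 μ)
    (hfg : Disjoint (Function.support f) (Function.support g)) :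
    ‖hf.toLp f + hg.toLp g‖ = ‖hf.toLp f‖ + ‖hg.toLp g‖ := by
  have hnorm : ∀ x, ‖f x + g x‖ = ‖f x‖ + ‖g x‖ := fun x => by
    by_cases hfx : f x = 0
    · simp [hfx]
    · simp [Function.notMem_support.mp (Set.disjoint_left.mp hfg hfx)]
  have norm_eq {h : Ω → E} (hh : MemLp h 1 μ) : ‖hh.toLp h‖ = ∫ x, ‖h x‖ ∂μ :=
    L1.norm_of_fun_eq_integral_norm (memLp_one_iff_integrable.mp hh)
  rw [← MemLp.toLp_add, norm_eq, norm_eq, norm_eq, ← integral_add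
    (memLp_one_iff_integrable.mp hf).norm (memLp_one_iff_integrable.mp hg).norm]
  exact integral_congr_ae (.of_forall hnorm)

lemma opNorm_le_of_forall_indicatorConstLp {E F : Type*} [NormedAddCommGroup E]
    [NormedSpace ℝ E] [NormedAddCommGroup F] [NormedSpace ℝ F] (ψ : Lp E 1 μ →L[ℝ] F) {C : ℝ}
    (hC : 0 ≤ C)
    (h : ∀ s (hs : MeasurableSet s) (hμs : μ s ≠ ∞) (c : E),
      ‖ψ (indicatorConstLp 1 hs hμs c)‖ ≤ C * ‖indicatorConstLp 1 hs hμs c‖) :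
    ‖ψ‖ ≤ C := by
  refine ψ.opNorm_le_bound hC fun f => ?_
  induction f using Lp.induction one_ne_top with
  | indicatorConst c hs hμs => exact h _ hs hμs.ne c
  | add hf hg hfg hf' hg' =>
    rw [map_add, norm_toLp_add_of_disjoint hf hg hfg, mul_add]
    exact (norm_add_le _ _).trans (add_le_add hf' hg')
  | isClosed =>
    exact isClosed_le (continuous_norm.comp ψ.continuous) (continuous_const.mul continuous_norm)

noncomputable def indicatorMul {A : Set Ω} (hA : MeasurableSet A) : Lp ℝ 1 μ →L[ℝ] Lp ℝ 1 μ :=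
  (ContinuousLinearMap.mul ℝ ℝ).holderL μ ⊤ 1 1
    (((memLp_top_const (1 : ℝ)).indicator hA).toLp (A.indicator fun _ => 1))

lemma coeFn_indicatorMul {A : Set Ω} (hA : MeasurableSet A) (f : Lp ℝ 1 μ) :
    ⇑(indicatorMul hA f) =ᵐ[μ] A.indicator f := by
  rw [indicatorMul, ContinuousLinearMap.holderL_apply_apply]
  refine ((ContinuousLinearMap.mul ℝ ℝ).coeFn_holder _ _).trans ?_
  filter_upwards [((memLp_top_const (μ := μ) (1 : ℝ)).indicator hA).coeFn_toLp] with x hx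
  rw [hx]
  by_cases hx : x ∈ A <;> simp [hx]

lemma indicatorMul_of_mem_LoneSub {A : Set Ω} (hA : MeasurableSet A) {f : Lp ℝ 1 μ}
    (hf : f ∈ LoneSub μ A) : indicatorMul hA f = f := by
  ext1
  filter_upwards [coeFn_indicatorMul hA f, hf] with x h1 h2
  rw [h1]
  by_cases hx : x ∈ A
  · exact Set.indicator_of_mem hx _
  · rw [Set.indicator_of_notMem hx, h2 hx]

lemma indicatorMul_indicatorConstLp {A s : Set Ω} (hA : MeasurableSet A) (hs : MeasurableSet s)
    (hμs : μ s ≠ ∞) (c : ℝ) :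
    indicatorMul hA (indicatorConstLp 1 hs hμs c) =
      indicatorConstLp 1 (hA.inter hs) (measure_inter_ne_top_of_right_ne_top hμs) c := by
  ext1
  filter_upwards [coeFn_indicatorMul hA (indicatorConstLp 1 hs hμs c),
    indicatorConstLp_coeFn (p := 1) (hs := hs) (hμs := hμs) (c := c),
    indicatorConstLp_coeFn (p := 1) (hs := hA.inter hs)
      (hμs := measure_inter_ne_top_of_right_ne_top hμs) (c := c)] with x h1 h2 h3
  classical
  rw [h1, h3, Set.indicator_apply, h2]
  by_cases hx : x ∈ A <;> by_cases hx' : x ∈ s <;> simp [hx, hx']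

lemma exists_lt_abs_apply_normInd (φ : StrongDual ℝ (Lp ℝ 1 μ)) {A : Set Ω}
    (hA : MeasurableSet A) {c : ℝ} (hc : 0 ≤ c) {f : Lp ℝ 1 μ} (hf : f ∈ LoneSub μ A)
    (hlt : c * ‖f‖ < |φ f|) :
    ∃ B ⊆ A, ∃ (hB : MeasurableSet B) (hμB : μ B ≠ ∞), 0 < μ B ∧
      c < |φ (normInd μ hB hμB)| := by
  by_contra! hle
  have hbound : ‖φ.comp (indicatorMul hA)‖ ≤ c := by
    refine opNorm_le_of_forall_indicatorConstLp _ hc fun s hs hμs a => ?_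
    have hAs := measure_inter_ne_top_of_right_ne_top (s := A) hμs
    rw [ContinuousLinearMap.comp_apply, indicatorMul_indicatorConstLp,
      indicatorConstLp_eq_smul_normInd, map_smul, smul_eq_mul, norm_indicatorConstLp_one,
      norm_mul, norm_mul, Real.norm_of_nonneg measureReal_nonneg]
    have hmass : μ.real (A ∩ s) * ‖φ (normInd μ (hA.inter hs) hAs)‖ ≤ μ.real s * c := by
      rcases eq_zero_or_pos (μ (A ∩ s)) with h0 | hpos
      · simp [measureReal_def, h0, mul_nonneg, hc]
      · exact mul_le_mul (measureReal_mono Set.inter_subset_right hμs)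
          (hle _ Set.inter_subset_left _ _ hpos) (norm_nonneg _) measureReal_nonneg
    linarith [mul_le_mul_of_nonneg_left hmass (norm_nonneg a)]
  have := (φ.comp (indicatorMul hA)).le_of_opNorm_le hbound f
  rw [ContinuousLinearMap.comp_apply, indicatorMul_of_mem_LoneSub hA hf, Real.norm_eq_abs] at this
  exact this.not_gt hlt

open Classical in
noncomputable def signedMeasureOfDual (φ : StrongDual ℝ (Lp ℝ 1 μ)) {B : Set Ω}
    (hB : MeasurableSet B) (hμB : μ B ≠ ∞) : SignedMeasure Ω :=
  haveI : Fact (μ B < ∞) := ⟨hμB.lt_top⟩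
  VectorMeasure.of_additive_of_le_measure (μ := ‖φ‖₊ • μ.restrict B)
    (fun E => if hE : MeasurableSet E then
      φ (indicatorConstLp 1 (hE.inter hB) (measure_inter_ne_top_of_right_ne_top hμB) 1) else 0)
    (fun E => by
      split_ifs with hE
      · rw [Measure.smul_apply, Measure.restrict_apply hE, ENNReal.smul_def, smul_eq_mul,
          ← enorm_eq_nnnorm]
        refine φ.le_opENorm_of_le (enorm_indicatorConstLp_le.trans ?_)
        simp
      · simp)
    (fun E F hE hF hEF => by
      rw [dif_pos (hE.union hF), dif_pos hE, dif_pos hF, ← map_add,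
        ← indicatorConstLp_disjoint_union (hE.inter hB) (hF.inter hB)
          (measure_inter_ne_top_of_right_ne_top hμB) (measure_inter_ne_top_of_right_ne_top hμB)
          (hEF.mono Set.inter_subset_left Set.inter_subset_left)]
      simp only [Set.union_inter_distrib_right])
    (fun E hE => dif_neg hE)

open Classical in
lemma signedMeasureOfDual_apply_of_subset (φ : StrongDual ℝ (Lp ℝ 1 μ)) {B E : Set Ω}
    (hB : MeasurableSet B) (hμB : μ B ≠ ∞) (hE : MeasurableSet E) (hEB : E ⊆ B) :
    signedMeasureOfDual φ hB hμB E =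
      φ (indicatorConstLp 1 hE (measure_ne_top_of_subset hEB hμB) 1) := by
  change dite _ _ _ = _
  rw [dif_pos hE]
  simp only [Set.inter_eq_left.mpr hEB]

lemma exists_subset_forall_le_apply_normInd (φ : StrongDual ℝ (Lp ℝ 1 μ)) {B : Set Ω}
    (hB : MeasurableSet B) (hμB : μ B ≠ ∞) (hμB₀ : 0 < μ B) {c : ℝ}
    (hc : c < φ (normInd μ hB hμB)) :
    ∃ B₁ ⊆ B, MeasurableSet B₁ ∧ 0 < μ B₁ ∧ ∀ B' ⊆ B₁, ∀ (hB' : MeasurableSet B')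
      (hμB' : μ B' ≠ ∞), 0 < μ B' → c ≤ φ (normInd μ hB' hμB') := by
  have : IsFiniteMeasure (μ.restrict B) := ⟨by simpa using hμB.lt_top⟩
  set σ := c • (μ.restrict B).toSignedMeasure - signedMeasureOfDual φ hB hμB
  have hσ : ∀ E (hE : MeasurableSet E) (hμE : μ E ≠ ∞), E ⊆ B →
      σ E = μ.real E * (c - φ (normInd μ hE hμE)) := by
    intro E hE hμE hEB
    rw [sub_apply, smul_apply,
      Measure.toSignedMeasure_apply_measurable hE, measureReal_restrict_apply hE,
      Set.inter_eq_left.mpr hEB, signedMeasureOfDual_apply_of_subset φ hB hμB hE hEB,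
      indicatorConstLp_eq_smul_normInd, map_smul, smul_eq_mul, smul_eq_mul]
    ring
  obtain ⟨B₁, hB₁, hB₁B, hσB₁, hσB₁_neg⟩ := SignedMeasure.exists_subset_restrict_nonpos
    (s := σ) (i := B) (by
      rw [hσ B hB hμB le_rfl]
      exact mul_neg_of_pos_of_neg (ENNReal.toReal_pos hμB₀.ne' hμB) (sub_neg.mpr hc))
  refine ⟨B₁, hB₁B, hB₁, pos_iff_ne_zero.mpr fun h0 => ?_, fun B' hB'B₁ hB' hμB' hpos => ?_⟩
  · rw [hσ B₁ hB₁ (measure_ne_top_of_subset hB₁B hμB) hB₁B] at hσB₁_neg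
    simp [measureReal_def, h0] at hσB₁_neg
  · have hσB' := VectorMeasure.subset_le_of_restrict_le_restrict σ 0 hB₁ hσB₁ hB'B₁
    rw [hσ B' hB' hμB' (hB'B₁.trans hB₁B), zero_apply] at hσB'
    have : 0 < μ.real B' := ENNReal.toReal_pos hpos.ne' hμB'
    nlinarith

lemma norm_add_norm_le_norm_add_add_two_mul_setIntegral {E : Type*} [NormedAddCommGroup E]
    (f g : Lp E 1 μ) {B : Set Ω} (hB : MeasurableSet B) (hf : ∀ᵐ x ∂μ, x ∉ B → f x = 0) :
    ‖f‖ + ‖g‖ ≤ ‖f + g‖ + 2 * ∫ x in B, ‖g x‖ ∂μ := by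
  have hfi := (L1.integrable_coeFn f).norm
  have hgi := (L1.integrable_coeFn g).norm
  have hpt : ∀ᵐ x ∂μ, ‖f x‖ + ‖g x‖ ≤ ‖(f + g) x‖ + 2 * B.indicator (fun x => ‖g x‖) x := by
    filter_upwards [hf, Lp.coeFn_add f g] with x hfx hadd
    rw [hadd, Pi.add_apply]
    by_cases hx : x ∈ B
    · rw [Set.indicator_of_mem hx]
      linarith [norm_le_add_norm_add (f x) (g x)]
    · simp [Set.indicator_of_notMem hx, hfx hx]
  calc ‖f‖ + ‖g‖ = ∫ x, (‖f x‖ + ‖g x‖) ∂μ := by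
        rw [integral_add hfi hgi, L1.norm_eq_integral_norm, L1.norm_eq_integral_norm]
    _ ≤ ∫ x, (‖(f + g) x‖ + 2 * B.indicator (fun x => ‖g x‖) x) ∂μ :=
        integral_mono_ae (hfi.add hgi)
          ((L1.integrable_coeFn (f + g)).norm.add ((hgi.indicator hB).const_mul 2)) hpt
    _ = ‖f + g‖ + 2 * ∫ x in B, ‖g x‖ ∂μ := by
        rw [integral_add (L1.integrable_coeFn (f + g)).norm ((hgi.indicator hB).const_mul 2),
          integral_const_mul, integral_indicator hB, L1.norm_eq_integral_norm]

lemma one_add_le_norm_add_of_lt_apply_normInd (T : Lp ℝ 1 μ →L[ℝ] Lp ℝ 1 μ)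
    (hcond : ∀ ε > (0 : ℝ), ∀ A : Set Ω, MeasurableSet A → 0 < μ A →
      ∃ B ⊆ A, ∃ (hBm : MeasurableSet B) (hBfin : μ B ≠ ∞), 0 < μ B ∧
        ∫ x in B, |(T (normInd μ hBm hBfin) : Ω → ℝ) x| ∂μ < ε)
    {A : Set Ω} (ψ : StrongDual ℝ (Lp ℝ 1 μ)) (hψ : ‖ψ‖ ≤ 1) {B : Set Ω} (hBA : B ⊆ A)
    (hB : MeasurableSet B) (hμB : μ B ≠ ∞) (hμB₀ : 0 < μ B) {c : ℝ}
    (hc : c < ψ (T (normInd μ hB hμB))) :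
    1 + c ≤ ‖(LoneSub μ A).subtypeL + T.comp (LoneSub μ A).subtypeL‖ := by
  obtain ⟨B₁, hB₁B, hB₁, hμB₁, hge⟩ :=
    exists_subset_forall_le_apply_normInd (ψ.comp T) hB hμB hμB₀ hc
  refine le_of_forall_pos_le_add fun ε hε => ?_
  obtain ⟨B', hB'B₁, hB', hμB', hμB'₀, hsmall⟩ := hcond (ε / 2) (half_pos hε) B₁ hB₁ hμB₁
  set n := normInd μ hB' hμB'
  have hn : n ∈ LoneSub μ A := normInd_mem_LoneSub ((hB'B₁.trans hB₁B).trans hBA) hB' hμB'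
  have hn1 : ‖n‖ = 1 := norm_normInd hB' hμB' hμB'₀.ne'
  have hTn : c ≤ ‖T n‖ := (hge B' hB'B₁ hB' hμB' hμB'₀).trans
    ((le_abs_self _).trans (by simpa using ψ.le_of_opNorm_le hψ (T n)))
  calc 1 + c ≤ ‖n‖ + ‖T n‖ := by rw [hn1]; linarith
    _ ≤ ‖n + T n‖ + 2 * ∫ x in B', ‖T n x‖ ∂μ :=
      norm_add_norm_le_norm_add_add_two_mul_setIntegral n (T n) hB'
        indicatorConstLp_coeFn_notMem
    _ ≤ ‖n + T n‖ + ε := by simp only [Real.norm_eq_abs]; linarith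
    _ ≤ ‖(LoneSub μ A).subtypeL + T.comp (LoneSub μ A).subtypeL‖ + ε := by
      gcongr
      exact ((LoneSub μ A).subtypeL + T.comp (LoneSub μ A).subtypeL).unit_le_opNorm ⟨n, hn⟩
        hn1.le

end

theorem stmt3_general (μ : Measure Ω)
    (T : Lp ℝ 1 μ →L[ℝ] Lp ℝ 1 μ)
    (hcond : ∀ ε > (0 : ℝ), ∀ A : Set Ω, MeasurableSet A → 0 < μ A →
      ∃ B ⊆ A, ∃ (hBm : MeasurableSet B) (hBfin : μ B ≠ ∞), 0 < μ B ∧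
        ∫ x in B, |(T (normInd μ hBm hBfin) : Ω → ℝ) x| ∂μ < ε) :
    ∀ A : Set Ω, MeasurableSet A → 0 < μ A →
      ‖(LoneSub μ A).subtypeL + T.comp (LoneSub μ A).subtypeL‖
        = 1 + ‖T.comp (LoneSub μ A).subtypeL‖ := by
  intro A hA hμA
  refine le_antisymm ((norm_add_le _ (T.comp (LoneSub μ A).subtypeL)).trans
    (add_le_add_left (Submodule.norm_subtypeL_le _) _))
    (le_of_forall_lt_imp_le_of_dense fun a ha => ?_)
  obtain ⟨c, rfl⟩ : ∃ c, a = 1 + c := ⟨a - 1, by ring⟩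
  rcases lt_or_ge c 0 with hc | hc
  · -- any `B` will do, with the zero functional
    obtain ⟨B, hBA, hB, hμB, hμB₀, -⟩ := hcond 1 one_pos A hA hμA
    exact one_add_le_norm_add_of_lt_apply_normInd T hcond 0 (by simp) hBA hB hμB hμB₀
      (by simpa using hc)
  obtain ⟨x, hx1, hx⟩ := (T.comp (LoneSub μ A).subtypeL).exists_lt_apply_of_lt_opNorm
    (show c < _ by linarith)
  obtain ⟨ψ, hψ, hψx⟩ := exists_dual_vector'' ℝ (T x)
  obtain ⟨B, hBA, hB, hμB, hμB₀, hlt⟩ := exists_lt_abs_apply_normInd (ψ.comp T) hA hc x.2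
    (by
      rw [ContinuousLinearMap.comp_apply, hψx, RCLike.ofReal_real_eq_id, id_eq, abs_norm]
      exact (mul_le_of_le_one_right hc hx1.le).trans_lt hx)
  rcases lt_abs.mp hlt with h | h
  · exact one_add_le_norm_add_of_lt_apply_normInd T hcond ψ hψ hBA hB hμB hμB₀ h
  · exact one_add_le_norm_add_of_lt_apply_normInd T hcond (-ψ) (by rwa [norm_neg])
      hBA hB hμB hμB₀ h

/-- If `T` shifts sufficiently many normalized indicators off their supports,
then every restriction `T_A` satisfies the Daugavet equation. -/
theorem stmt3 (μ : Measure Ω) (hsemi : ∀ A : Set Ω, MeasurableSet A → μ A = ∞ →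
      ∃ B ⊆ A, MeasurableSet B ∧ 0 < μ B ∧ μ B < ∞)
    (T : Lp ℝ 1 μ →L[ℝ] Lp ℝ 1 μ)
    (hcond : ∀ ε > (0 : ℝ), ∀ A : Set Ω, MeasurableSet A → 0 < μ A →
      ∃ B ⊆ A, ∃ (hBm : MeasurableSet B) (hBfin : μ B ≠ ∞), 0 < μ B ∧
        ∫ x in B, |(T (normInd μ hBm hBfin) : Ω → ℝ) x| ∂μ < ε) :
    ∀ A : Set Ω, MeasurableSet A → 0 < μ A →
      ‖(LoneSub μ A).subtypeL + T.comp (LoneSub μ A).subtypeL‖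
        = 1 + ‖T.comp (LoneSub μ A).subtypeL‖ :=
  stmt3_general μ T hcond
end

section
/- Let (Ω, Σ, μ) be a measure space without atoms of infinite measure and let U, V be bounded linear operators on L¹(Ω), each satisfying: for every ε > 0 and every A ∈ Σ of positive measure, there exists A' ⊆ A of positive measure such that every B ⊆ A' of positive measure admits B' ⊆ B of positive measure with ‖χ_{B'}/μ(B') − χ_B/μ(B)‖ < ε and ‖χ_{B'} · T(χ_{B'}/μ(B'))‖ < ε (for T = U and T = V respectively). Then U + V also satisfies this property, with T = U + V. -/
open MeasureTheory ENNReal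

variable {Ω : Type*} [MeasurableSpace Ω]

/-- Condition (ii) of the key Proposition for an operator `T` on `L¹(μ)`. -/
def propII (μ : Measure Ω) (T : Lp ℝ 1 μ →L[ℝ] Lp ℝ 1 μ) : Prop :=
  ∀ ε > (0 : ℝ), ∀ A : Set Ω, MeasurableSet A → 0 < μ A →
    ∃ A' ⊆ A, MeasurableSet A' ∧ 0 < μ A' ∧ μ A' ≠ ∞ ∧
      ∀ B ⊆ A', ∀ (hBm : MeasurableSet B), 0 < μ B → ∀ (hBfin : μ B ≠ ∞),
        ∃ B' ⊆ B, ∃ (hB'm : MeasurableSet B') (hB'fin : μ B' ≠ ∞), 0 < μ B' ∧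
          ‖normInd μ hB'm hB'fin - normInd μ hBm hBfin‖ < ε ∧
          ∫ x in B', |(T (normInd μ hB'm hB'fin) : Ω → ℝ) x| ∂μ < ε

/-- Condition (ii) is stable under addition of operators. -/
theorem stmt6 (μ : Measure Ω) (hsemi : ∀ A : Set Ω, MeasurableSet A → μ A = ∞ →
      ∃ B ⊆ A, MeasurableSet B ∧ 0 < μ B ∧ μ B < ∞)
    (U V : Lp ℝ 1 μ →L[ℝ] Lp ℝ 1 μ) (hU : propII μ U) (hV : propII μ V) :
    propII μ (U + V) := by
  intro ε hε A hA hμA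
  have hV1 : (0:ℝ) < ‖V‖ + 1 := by positivity
  set ε1 := ε / (2 * (‖V‖ + 1)) with hε1def
  have hε1 : 0 < ε1 := by positivity
  have hε2 : 0 < ε / 2 := by positivity
  obtain ⟨A', hA'A, hA'm, hA'pos, hA'fin, hUprop⟩ := hU ε1 hε1 A hA hμA
  obtain ⟨A'', hA''A', hA''m, hA''pos, hA''fin, hVprop⟩ := hV (ε/2) hε2 A' hA'm hA'pos
  refine ⟨A'', hA''A'.trans hA'A, hA''m, hA''pos, hA''fin, ?_⟩
  intro B hBA'' hBm hBpos hBfin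
  obtain ⟨B', hB'B, hB'm, hB'fin, hB'pos, hB'norm, hB'int⟩ := hVprop B hBA'' hBm hBpos hBfin
  obtain ⟨B'', hB''B', hB''m, hB''fin, hB''pos, hB''norm, hB''int⟩ :=
    hUprop B' ((hB'B.trans hBA'').trans hA''A') hB'm hB'pos hB'fin
  have hle : ε1 ≤ ε / 2 := by
    rw [hε1def]
    rw [div_le_div_iff₀ (by positivity) (by norm_num)]
    nlinarith [norm_nonneg V, hε.le]
  refine ⟨B'', hB''B'.trans hB'B, hB''m, hB''fin, hB''pos, ?_, ?_⟩
  · calc ‖normInd μ hB''m hB''fin - normInd μ hBm hBfin‖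
        ≤ ‖normInd μ hB''m hB''fin - normInd μ hB'm hB'fin‖ +
          ‖normInd μ hB'm hB'fin - normInd μ hBm hBfin‖ := norm_sub_le_norm_sub_add_norm_sub _ _ _
      _ < ε1 + ε/2 := add_lt_add hB''norm hB'norm
      _ ≤ ε/2 + ε/2 := by linarith
      _ = ε := by ring
  · set g'' := normInd μ hB''m hB''fin with hg''
    set g' := normInd μ hB'm hB'fin with hg'
    have heq : (U + V) g'' = U g'' + (V g' + V (g'' - g')) := by
      simp only [ContinuousLinearMap.add_apply, map_sub]
      abel
    have hae : ∀ᵐ x ∂μ, |((U + V) g'' : Ω → ℝ) x| ≤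
        |(U g'' : Ω → ℝ) x| + |(V g' : Ω → ℝ) x| + |(V (g'' - g') : Ω → ℝ) x| := by
      rw [heq]
      filter_upwards [Lp.coeFn_add (U g'') (V g' + V (g'' - g')),
        Lp.coeFn_add (V g') (V (g'' - g'))] with x h1 h2
      rw [h1, Pi.add_apply, h2, Pi.add_apply, ← add_assoc]
      exact abs_add_three _ _ _
    have hint1 : Integrable (fun x => |(U g'' : Ω → ℝ) x|) μ := (L1.integrable_coeFn (U g'')).abs
    have hint2 : Integrable (fun x => |(V g' : Ω → ℝ) x|) μ := (L1.integrable_coeFn (V g')).abs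
    have hint3 : Integrable (fun x => |(V (g'' - g') : Ω → ℝ) x|) μ :=
      (L1.integrable_coeFn (V (g'' - g'))).abs
    have hint0 : Integrable (fun x => |((U + V) g'' : Ω → ℝ) x|) μ :=
      (L1.integrable_coeFn ((U + V) g'')).abs
    have step1 : ∫ x in B'', |((U + V) g'' : Ω → ℝ) x| ∂μ ≤
        ∫ x in B'', (|(U g'' : Ω → ℝ) x| + |(V g' : Ω → ℝ) x| + |(V (g'' - g') : Ω → ℝ) x|) ∂μ := by
      refine integral_mono_ae hint0.integrableOn
        (((hint1.add hint2).add hint3).integrableOn) ?_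
      exact ae_restrict_of_ae hae
    have step2 : ∫ x in B'', (|(U g'' : Ω → ℝ) x| + |(V g' : Ω → ℝ) x|
          + |(V (g'' - g') : Ω → ℝ) x|) ∂μ
        = (∫ x in B'', |(U g'' : Ω → ℝ) x| ∂μ) + (∫ x in B'', |(V g' : Ω → ℝ) x| ∂μ)
          + ∫ x in B'', |(V (g'' - g') : Ω → ℝ) x| ∂μ := by
      have e1 : ∫ x in B'', ((|(U g'' : Ω → ℝ) x| + |(V g' : Ω → ℝ) x|)
            + |(V (g'' - g') : Ω → ℝ) x|) ∂μ
          = (∫ x in B'', (|(U g'' : Ω → ℝ) x| + |(V g' : Ω → ℝ) x|) ∂μ)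
            + ∫ x in B'', |(V (g'' - g') : Ω → ℝ) x| ∂μ :=
        integral_add (hint1.add hint2).integrableOn hint3.integrableOn
      have e2 : ∫ x in B'', (|(U g'' : Ω → ℝ) x| + |(V g' : Ω → ℝ) x|) ∂μ
          = (∫ x in B'', |(U g'' : Ω → ℝ) x| ∂μ) + ∫ x in B'', |(V g' : Ω → ℝ) x| ∂μ :=
        integral_add hint1.integrableOn hint2.integrableOn
      rw [e1, e2]
    have t2 : ∫ x in B'', |(V g' : Ω → ℝ) x| ∂μ ≤ ∫ x in B', |(V g' : Ω → ℝ) x| ∂μ := by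
      refine setIntegral_mono_set hint2.integrableOn ?_ (HasSubset.Subset.eventuallyLE hB''B')
      exact ae_of_all _ fun x => abs_nonneg _
    have t3 : ∫ x in B'', |(V (g'' - g') : Ω → ℝ) x| ∂μ ≤ ‖V‖ * ε1 := by
      have h1 : ∫ x in B'', |(V (g'' - g') : Ω → ℝ) x| ∂μ ≤ ∫ x, |(V (g'' - g') : Ω → ℝ) x| ∂μ :=
        setIntegral_le_integral hint3 (ae_of_all _ fun x => abs_nonneg _)
      have h2 : ∫ x, |(V (g'' - g') : Ω → ℝ) x| ∂μ = ‖V (g'' - g')‖ := by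
        rw [L1.norm_eq_integral_norm]
        simp [Real.norm_eq_abs]
      have h3 : ‖V (g'' - g')‖ ≤ ‖V‖ * ‖g'' - g'‖ := V.le_opNorm _
      have h4 : ‖V‖ * ‖g'' - g'‖ ≤ ‖V‖ * ε1 :=
        mul_le_mul_of_nonneg_left hB''norm.le (norm_nonneg V)
      linarith
    have hsum : ε1 + ε/2 + ‖V‖ * ε1 = ε := by
      rw [hε1def]; field_simp; ring
    calc ∫ x in B'', |((U + V) g'' : Ω → ℝ) x| ∂μ
        ≤ (∫ x in B'', |(U g'' : Ω → ℝ) x| ∂μ) + (∫ x in B'', |(V g' : Ω → ℝ) x| ∂μ)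
          + ∫ x in B'', |(V (g'' - g') : Ω → ℝ) x| ∂μ := by rw [← step2]; exact step1
      _ < ε1 + ε/2 + ‖V‖ * ε1 := by
          have := lt_of_le_of_lt t2 hB'int
          linarith [hB''int]
      _ = ε := hsum
end

section
/- Let (Ω, Σ, μ) be a measure space, A ∈ Σ with μ(A) > 0, and T a bounded operator on L¹(Ω). Suppose B₀ ⊆ A satisfies 0 < μ(B₀) < ∞, ‖T(χ_{B₀}/μ(B₀))‖ > ‖T_A‖ − ε, and ‖χ_{B₀} · T(χ_{B₀}/μ(B₀))‖ < ε. Then ‖Id_A + T_A‖ ≥ ‖χ_{B₀}/μ(B₀) + T(χ_{B₀}/μ(B₀))‖ > 1 + ‖T_A‖ − 3ε. -/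
open MeasureTheory ENNReal

variable {Ω : Type*} [MeasurableSpace Ω]

/-! On `B₀` the pointwise bound `|f + Tf| ≥ |f| - |Tf|` costs at most `∫_{B₀} |Tf| < ε`, and off
`B₀`, where `f = 0`, we have `|f + Tf| = |Tf|`; hence for `f = χ_{B₀}/μ(B₀)`,
`‖f + Tf‖₁ ≥ ‖f‖₁ + ‖Tf‖₁ - 2 ∫_{B₀} |Tf| > 1 + ‖T_A‖ - 3ε`. Since `f` is a unit vector of
`L¹(A)`, `‖f + Tf‖₁ ≤ ‖Id_A + T_A‖`. -/

theorem integral_norm_sub_integral_norm_le {E : Type*} [NormedAddCommGroup E] {ν : Measure Ω}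
    {f g : Ω → E} (hf : Integrable f ν) (hg : Integrable g ν) :
    ∫ x, ‖f x‖ ∂ν - ∫ x, ‖g x‖ ∂ν ≤ ∫ x, ‖f x + g x‖ ∂ν := by
  rw [← integral_sub hf.norm hg.norm]
  exact integral_mono (hf.norm.sub hg.norm) (hf.add hg).norm
    fun x => norm_sub_le_norm_add (f x) (g x)

theorem L1.norm_add_norm_sub_le_norm_add {E : Type*} [NormedAddCommGroup E] {μ : Measure Ω}
    (f g : Lp E 1 μ) {B : Set Ω} (hB : MeasurableSet B) :
    ‖f‖ + ‖g‖ - 2 * (∫ x in Bᶜ, ‖f x‖ ∂μ + ∫ x in B, ‖g x‖ ∂μ) ≤ ‖f + g‖ := by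
  have hf := L1.integrable_coeFn f
  have hg := L1.integrable_coeFn g
  have hfg : ‖f + g‖ = ∫ x, ‖f x + g x‖ ∂μ := by
    rw [L1.norm_eq_integral_norm]
    refine integral_congr_ae ?_
    filter_upwards [Lp.coeFn_add f g] with x hx
    rw [hx, Pi.add_apply]
  have hfg_int : Integrable (fun x => ‖f x + g x‖) μ := (hf.add hg).norm
  have on_B := integral_norm_sub_integral_norm_le hf.restrict (hg.restrict (s := B))
  have off_B := integral_norm_sub_integral_norm_le hg.restrict (hf.restrict (s := Bᶜ))
  simp only [add_comm (g _)] at off_B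
  rw [L1.norm_eq_integral_norm f, L1.norm_eq_integral_norm g, hfg,
    ← integral_add_compl hB hf.norm, ← integral_add_compl hB hg.norm,
    ← integral_add_compl hB hfg_int]
  linarith

variable {μ : Measure Ω} {B : Set Ω} (hB : MeasurableSet B) (hBfin : μ B ≠ ∞)

theorem normInd_eq_zero_of_notMem : ∀ᵐ x ∂μ, x ∉ B → normInd μ hB hBfin x = 0 := by
  filter_upwards [indicatorConstLp_coeFn (p := 1) (hs := hB) (hμs := hBfin)
    (c := ((μ B).toReal)⁻¹)] with x hx hxB
  rw [normInd, hx, Set.indicator_of_notMem hxB]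

theorem normInd_mem_loneSub {A : Set Ω} (hBA : B ⊆ A) : normInd μ hB hBfin ∈ LoneSub μ A := by
  filter_upwards [normInd_eq_zero_of_notMem hB hBfin] with x hx hxA
  exact hx fun hxB => hxA (hBA hxB)

theorem setIntegral_compl_norm_normInd :
    ∫ x in Bᶜ, ‖normInd μ hB hBfin x‖ ∂μ = 0 := by
  refine setIntegral_eq_zero_of_ae_eq_zero ?_
  filter_upwards [normInd_eq_zero_of_notMem hB hBfin] with x hx hxB
  rw [hx hxB, norm_zero]

theorem norm_normInd_s9 (hB0 : 0 < μ B) : ‖normInd μ hB hBfin‖ = 1 := by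
  have hμB : 0 < (μ B).toReal := ENNReal.toReal_pos hB0.ne' hBfin
  rw [normInd, norm_indicatorConstLp one_ne_zero one_ne_top]
  simp [Measure.real, abs_of_pos hμB, hμB.ne']

theorem stmt9_general (μ : Measure Ω) {A : Set Ω}
    (T : Lp ℝ 1 μ →L[ℝ] Lp ℝ 1 μ) {B₀ : Set Ω} (hB₀A : B₀ ⊆ A)
    (hB₀m : MeasurableSet B₀) (hB₀0 : 0 < μ B₀) (hB₀fin : μ B₀ ≠ ∞) {ε : ℝ}
    (h1 : ‖T (normInd μ hB₀m hB₀fin)‖ > ‖T.comp (LoneSub μ A).subtypeL‖ - ε)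
    (h2 : ∫ x in B₀, |(T (normInd μ hB₀m hB₀fin) : Ω → ℝ) x| ∂μ < ε) :
    ‖(LoneSub μ A).subtypeL + T.comp (LoneSub μ A).subtypeL‖
        ≥ ‖normInd μ hB₀m hB₀fin + T (normInd μ hB₀m hB₀fin)‖ ∧
      ‖normInd μ hB₀m hB₀fin + T (normInd μ hB₀m hB₀fin)‖
        > 1 + ‖T.comp (LoneSub μ A).subtypeL‖ - 3 * ε := by
  set f := normInd μ hB₀m hB₀fin
  have hf_norm : ‖f‖ = 1 := norm_normInd_s9 hB₀m hB₀fin hB₀0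
  constructor
  · exact ((LoneSub μ A).subtypeL + T.comp (LoneSub μ A).subtypeL).unit_le_opNorm
      ⟨f, normInd_mem_loneSub hB₀m hB₀fin hB₀A⟩ hf_norm.le
  · have h := L1.norm_add_norm_sub_le_norm_add f (T f) hB₀m
    rw [setIntegral_compl_norm_normInd, hf_norm] at h
    simp only [Real.norm_eq_abs] at h
    linarith

/-- The key lower estimate for `‖Id_A + T_A‖` from a normalized indicator that
`T` almost shifts off its support. -/
theorem stmt9 (μ : Measure Ω) {A : Set Ω} (hA : MeasurableSet A) (hA0 : 0 < μ A)
    (T : Lp ℝ 1 μ →L[ℝ] Lp ℝ 1 μ) {B₀ : Set Ω} (hB₀A : B₀ ⊆ A)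
    (hB₀m : MeasurableSet B₀) (hB₀0 : 0 < μ B₀) (hB₀fin : μ B₀ ≠ ∞) {ε : ℝ}
    (h1 : ‖T (normInd μ hB₀m hB₀fin)‖ > ‖T.comp (LoneSub μ A).subtypeL‖ - ε)
    (h2 : ∫ x in B₀, |(T (normInd μ hB₀m hB₀fin) : Ω → ℝ) x| ∂μ < ε) :
    ‖(LoneSub μ A).subtypeL + T.comp (LoneSub μ A).subtypeL‖
        ≥ ‖normInd μ hB₀m hB₀fin + T (normInd μ hB₀m hB₀fin)‖ ∧
      ‖normInd μ hB₀m hB₀fin + T (normInd μ hB₀m hB₀fin)‖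
        > 1 + ‖T.comp (LoneSub μ A).subtypeL‖ - 3 * ε :=
  stmt9_general μ T hB₀A hB₀m hB₀0 hB₀fin h1 h2
end

section
/- Let f, g ∈ L¹(μ) with ‖f‖ ≤ 1, ‖g‖ ≤ 1, and suppose ‖f + g‖ > 2 − ε and ‖f − g‖ > 2 − ε for some 0 < ε < 1. Then there exist disjoint measurable sets Ω₁, Ω₂ with ∫_{Ω₁} |g| dμ > (1 − ε)² and ∫_{Ω₂} |f| dμ > (1 − ε)². -/
/-!
Pointwise `|a + b| + |a - b| = 2 max (|a|, |b|)`, so integrating gives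
`∫ min (|f|, |g|) = ‖f‖ + ‖g‖ - (‖f + g‖ + ‖f - g‖) / 2 < ε`.
With `Ω₂ = {|g| < |f|}`, the mass of `g` on `Ω₂` and that of `f` off `Ω₂` are both at most this
integral, so `g` keeps more than `1 - ε > (1 - ε)²` of its norm on `Ω₂ᶜ`, and `f` on `Ω₂`.
-/

open MeasureTheory ENNReal

variable {Ω : Type*} [MeasurableSpace Ω]

lemma min_abs_eq_sub_half_abs_add_abs_sub (a b : ℝ) :
    min |a| |b| = |a| + |b| - (|a + b| + |a - b|) / 2 := by
  rcases abs_cases a with ⟨ha, _⟩ | ⟨ha, _⟩ <;> rcases abs_cases b with ⟨hb, _⟩ | ⟨hb, _⟩ <;>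
    rcases abs_cases (a + b) with ⟨hs, _⟩ | ⟨hs, _⟩ <;>
    rcases abs_cases (a - b) with ⟨hd, _⟩ | ⟨hd, _⟩ <;>
    rcases min_cases |a| |b| with ⟨hm, _⟩ | ⟨hm, _⟩ <;> linarith

namespace MeasureTheory.L1

variable {μ : Measure Ω}

lemma norm_eq_integral_abs (f : Lp ℝ 1 μ) : ‖f‖ = ∫ x, |f x| ∂μ := by
  simp [norm_eq_integral_norm]

lemma norm_add_eq_integral_abs (f g : Lp ℝ 1 μ) : ‖f + g‖ = ∫ x, |f x + g x| ∂μ := by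
  rw [norm_eq_integral_abs]
  exact integral_congr_ae <| by filter_upwards [Lp.coeFn_add f g] with x hx; rw [hx, Pi.add_apply]

lemma norm_sub_eq_integral_abs (f g : Lp ℝ 1 μ) : ‖f - g‖ = ∫ x, |f x - g x| ∂μ := by
  rw [norm_eq_integral_abs]
  exact integral_congr_ae <| by filter_upwards [Lp.coeFn_sub f g] with x hx; rw [hx, Pi.sub_apply]

lemma integral_min_abs (f g : Lp ℝ 1 μ) :
    ∫ x, min |f x| |g x| ∂μ = ‖f‖ + ‖g‖ - (‖f + g‖ + ‖f - g‖) / 2 := by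
  have hf := (integrable_coeFn f).abs
  have hg := (integrable_coeFn g).abs
  have hs : Integrable (fun x => |f x + g x|) μ :=
    ((integrable_coeFn f).add (integrable_coeFn g)).abs
  have hd : Integrable (fun x => |f x - g x|) μ :=
    ((integrable_coeFn f).sub (integrable_coeFn g)).abs
  have hfg : Integrable (fun x => |f x| + |g x|) μ := hf.add hg
  have hsd : Integrable (fun x => (|f x + g x| + |f x - g x|) / 2) μ := (hs.add hd).div_const 2
  simp_rw [min_abs_eq_sub_half_abs_add_abs_sub]
  rw [MeasureTheory.integral_sub hfg hsd, MeasureTheory.integral_add hf hg, integral_div,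
    MeasureTheory.integral_add hs hd, norm_eq_integral_abs f, norm_eq_integral_abs g,
    norm_add_eq_integral_abs, norm_sub_eq_integral_abs]

lemma sub_norm_le_setIntegral_compl_abs (f g : Lp ℝ 1 μ) {A : Set Ω} (hA : MeasurableSet A)
    (hle : ∀ x ∈ A, |g x| ≤ |f x|) :
    (‖f + g‖ + ‖f - g‖) / 2 - ‖f‖ ≤ ∫ x in Aᶜ, |g x| ∂μ := by
  have hg := (integrable_coeFn g).abs
  have hmin := (integrable_coeFn f).abs.inf hg
  have hA_le : ∫ x in A, |g x| ∂μ ≤ ‖f‖ + ‖g‖ - (‖f + g‖ + ‖f - g‖) / 2 :=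
    calc ∫ x in A, |g x| ∂μ = ∫ x in A, min |f x| |g x| ∂μ :=
          setIntegral_congr_fun hA fun x hx => (min_eq_right (hle x hx)).symm
      _ ≤ ∫ x, min |f x| |g x| ∂μ :=
          setIntegral_le_integral hmin (.of_forall fun x => le_min (abs_nonneg _) (abs_nonneg _))
      _ = ‖f‖ + ‖g‖ - (‖f + g‖ + ‖f - g‖) / 2 := integral_min_abs f g
  have hsplit : ∫ x in A, |g x| ∂μ + ∫ x in Aᶜ, |g x| ∂μ = ‖g‖ :=
    (integral_add_compl hA hg).trans (norm_eq_integral_abs g).symm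
  linarith

end MeasureTheory.L1

/-- Dor's theorem (two-function case): nearly extremal sum and difference in
`L¹` force almost disjoint supports. -/
theorem stmt10 (μ : Measure Ω) (f g : Lp ℝ 1 μ) (hf : ‖f‖ ≤ 1) (hg : ‖g‖ ≤ 1)
    {ε : ℝ} (hε0 : 0 < ε) (hε1 : ε < 1)
    (hsum : ‖f + g‖ > 2 - ε) (hdiff : ‖f - g‖ > 2 - ε) :
    ∃ Ω₁ Ω₂ : Set Ω, MeasurableSet Ω₁ ∧ MeasurableSet Ω₂ ∧ Disjoint Ω₁ Ω₂ ∧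
      (∫ x in Ω₁, |(g : Ω → ℝ) x| ∂μ) > (1 - ε) ^ 2 ∧
      (∫ x in Ω₂, |(f : Ω → ℝ) x| ∂μ) > (1 - ε) ^ 2 := by
  set A := {x | |(g : Ω → ℝ) x| < |(f : Ω → ℝ) x|}
  have hA : MeasurableSet A :=
    measurableSet_lt (Lp.stronglyMeasurable g).measurable.abs
      (Lp.stronglyMeasurable f).measurable.abs
  have hgA := L1.sub_norm_le_setIntegral_compl_abs f g hA fun x hx => hx.le
  have hfA := L1.sub_norm_le_setIntegral_compl_abs g f hA.compl fun x hx => not_lt.mp hx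
  rw [compl_compl, add_comm g, norm_sub_rev g] at hfA
  have hsq : (1 - ε) ^ 2 < 1 - ε := by nlinarith
  exact ⟨Aᶜ, A, hA.compl, hA, disjoint_compl_left, by linarith, by linarith⟩
end
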